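/- arXiv:1806.07075 — 2 statements merged into one kernel-verified Lean document; each statement's English description precedes it below -/
import Mathlib

section
/- Let S be a monoid, let (T, F) be a torsion theory of S-acts, let A be an S-act, let ρ be a Rees congruence on A with every member of Σ_ρ belonging to T, and let π : A → A/ρ be the canonical homomorphism. Then for every B ∈ T and every homomorphism f : B → A/ρ, the subact π⁻¹(f(B)) of A belongs to T. -/
universe u

/-- A (left) `S`-act: a type equipped with a monoid action of `S`. -/
structure SAct (S : Type u) [Monoid S] where
  carrier : Type u
  [mulAction : MulAction S carrier]

attribute [instance] SAct.mulAction

namespace SAct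

variable {S : Type u} [Monoid S]

/-- A homomorphism of `S`-acts. -/
def IsHom (A B : SAct S) (f : A.carrier → B.carrier) : Prop :=
  ∀ (s : S) (a : A.carrier), f (s • a) = s • f a

/-- A homomorphism is trivial if its image has at most one element. -/
def IsTrivialHom {A B : SAct S} (f : A.carrier → B.carrier) : Prop :=
  (Set.range f).Subsingleton

/-- Two `S`-acts are isomorphic if there is a bijective homomorphism between them. -/
def AreIso (A B : SAct S) : Prop :=
  ∃ f : A.carrier → B.carrier, IsHom A B f ∧ Function.Bijective f

/-- A subset of an `S`-act is a subact if it is closed under the action. -/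
def IsSubact (A : SAct S) (B : Set A.carrier) : Prop :=
  ∀ (s : S), ∀ a ∈ B, s • a ∈ B

/-- The `S`-act induced on a subact. -/
def sub (A : SAct S) (B : Set A.carrier) (h : IsSubact A B) : SAct S where
  carrier := ↥B
  mulAction :=
    { smul := fun s b => ⟨s • (b : A.carrier), h s b b.2⟩
      one_smul := fun b => Subtype.ext (one_smul S (b : A.carrier))
      mul_smul := fun s t b => Subtype.ext (mul_smul s t (b : A.carrier)) }

/-- A congruence on an `S`-act: an equivalence relation compatible with the action. -/
def IsActCon (A : SAct S) (ρ : Setoid A.carrier) : Prop :=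
  ∀ (s : S) (a a' : A.carrier), ρ a a' → ρ (s • a) (s • a')

/-- The quotient `S`-act of an `S`-act by a congruence. -/
def quot (A : SAct S) (ρ : Setoid A.carrier) (h : IsActCon A ρ) : SAct S where
  carrier := Quotient ρ
  mulAction :=
    { smul := fun s => Quotient.map (fun a => s • a) (fun a b hab => h s a b hab)
      one_smul := fun q => Quotient.inductionOn q (fun a => by
        show Quotient.map (fun a => (1 : S) • a) _ (Quotient.mk ρ a) = Quotient.mk ρ a
        rw [Quotient.map_mk, one_smul])
      mul_smul := fun s t q => Quotient.inductionOn q (fun a => by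
        show Quotient.map (fun a => (s * t) • a) _ (Quotient.mk ρ a)
            = Quotient.map (fun a => s • a) _ (Quotient.map (fun a => t • a) _ (Quotient.mk ρ a))
        rw [Quotient.map_mk, Quotient.map_mk, Quotient.map_mk, mul_smul]) }

/-- A system of pairwise disjoint non-trivial subacts of an `S`-act. -/
def IsSystem (A : SAct S) (Sys : Set (Set A.carrier)) : Prop :=
  (∀ B ∈ Sys, IsSubact A B ∧ ¬ B.Subsingleton) ∧
    (∀ B ∈ Sys, ∀ C ∈ Sys, B ≠ C → ∀ a ∈ B, a ∉ C)

/-- The Rees congruence determined by a system of pairwise disjoint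
non-trivial subacts: `a` and `b` are related iff `a = b` or `a` and `b`
lie in a common member of the system. -/
def reesSetoid (A : SAct S) (Sys : Set (Set A.carrier)) (hSys : IsSystem A Sys) :
    Setoid A.carrier where
  r a b := a = b ∨ ∃ B ∈ Sys, a ∈ B ∧ b ∈ B
  iseqv :=
    { refl := fun _ => Or.inl rfl
      symm := by
        rintro a b (rfl | ⟨B, hB, ha, hb⟩)
        · exact Or.inl rfl
        · exact Or.inr ⟨B, hB, hb, ha⟩
      trans := by
        rintro a b c (rfl | ⟨B, hB, ha, hb⟩) h2
        · exact h2
        · rcases h2 with rfl | ⟨C, hC, hb', hc⟩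
          · exact Or.inr ⟨B, hB, ha, hb⟩
          · by_cases hBC : B = C
            · exact Or.inr ⟨B, hB, ha, hBC ▸ hc⟩
            · exact absurd hb' (hSys.2 B hB C hC hBC b hb) }

/-- A Rees congruence is a congruence. -/
theorem reesSetoid_isActCon (A : SAct S) (Sys : Set (Set A.carrier)) (hSys : IsSystem A Sys) :
    IsActCon A (reesSetoid A Sys hSys) := by
  rintro s a a' (rfl | ⟨B, hB, ha, ha'⟩)
  · exact Or.inl rfl
  · exact Or.inr ⟨B, hB, (hSys.1 B hB).1 s a ha, (hSys.1 B hB).1 s a' ha'⟩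

/-- The system of non-singleton classes of a congruence (for a Rees congruence,
this is its system `Σ_ρ` of non-trivial subacts). -/
def nsClasses (A : SAct S) (ρ : Setoid A.carrier) : Set (Set A.carrier) :=
  {C | (∃ a, C = {x | ρ x a}) ∧ ¬ C.Subsingleton}

/-- A congruence is a Rees congruence if it arises from a system of pairwise
disjoint non-trivial subacts. -/
def IsRees (A : SAct S) (ρ : Setoid A.carrier) : Prop :=
  ∃ (Sys : Set (Set A.carrier)) (hSys : IsSystem A Sys), ρ = reesSetoid A Sys hSys

end SAct

open SAct

/-- A (normal) Hoehnke radical: an assignment of a congruence `rad A` to every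
`S`-act `A`, functorial with respect to homomorphisms, and with
`rad (A / rad A) = Δ`. -/
structure HoehnkeRadical (S : Type u) [Monoid S] where
  rad : (A : SAct S) → Setoid A.carrier
  isCon : ∀ A : SAct S, IsActCon A (rad A)
  functorial : ∀ {A B : SAct S} (f : A.carrier → B.carrier), IsHom A B f →
    ∀ a a' : A.carrier, rad A a a' → rad B (f a) (f a')
  rad_quot : ∀ A : SAct S, rad (A.quot (rad A) (isCon A)) = ⊥

namespace HoehnkeRadical

variable {S : Type u} [Monoid S]

/-- The radical class `R_r = {A : r(A) = ∇_A}` of a Hoehnke radical. -/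
def radClass (r : HoehnkeRadical S) : Set (SAct S) := {A | r.rad A = ⊤}

/-- The semisimple class `S_r = {A : r(A) = Δ_A}` of a Hoehnke radical. -/
def ssClass (r : HoehnkeRadical S) : Set (SAct S) := {A | r.rad A = ⊥}

/-- The pointwise order on Hoehnke radicals. -/
def le (r r' : HoehnkeRadical S) : Prop := ∀ A : SAct S, r.rad A ≤ r'.rad A

end HoehnkeRadical

/-- A Kurosh-Amitsur radical: a Hoehnke radical such that (i) every `rad A` is a
Rees congruence, (ii) every member of `Σ_{rad A}` is in the radical class, and
(iii) every system of pairwise disjoint non-trivial subacts belonging to the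
radical class is below `Σ_{rad A}`. -/
structure KARadical (S : Type u) [Monoid S] extends HoehnkeRadical S where
  rees : ∀ A : SAct S, IsRees A (rad A)
  cls_rad : ∀ A : SAct S, ∀ B ∈ nsClasses A (rad A), ∀ h : IsSubact A B,
    A.sub B h ∈ toHoehnkeRadical.radClass
  maximal : ∀ (A : SAct S) (Sys : Set (Set A.carrier)), IsSystem A Sys →
    (∀ B ∈ Sys, ∀ h : IsSubact A B, A.sub B h ∈ toHoehnkeRadical.radClass) →
    ∀ B ∈ Sys, ∃ C ∈ nsClasses A (rad A), B ⊆ C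

/-- A torsion theory: a pair `(T, F)` of classes of `S`-acts, each closed under
isomorphism and containing all trivial acts, such that (1) every homomorphism
from a member of `T` to a member of `F` is trivial, (2) `T` contains every act
all of whose homomorphisms into members of `F` are trivial, and (3) `F`
contains every act all of whose homomorphisms from members of `T` are trivial. -/
structure IsTorsionTheory {S : Type u} [Monoid S] (T F : Set (SAct S)) : Prop where
  iso_T : ∀ A B : SAct S, AreIso A B → A ∈ T → B ∈ T
  iso_F : ∀ A B : SAct S, AreIso A B → A ∈ F → B ∈ F
  trivial_T : ∀ A : SAct S, Subsingleton A.carrier → A ∈ T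
  trivial_F : ∀ A : SAct S, Subsingleton A.carrier → A ∈ F
  hom_trivial : ∀ A ∈ T, ∀ B ∈ F, ∀ f : A.carrier → B.carrier,
    IsHom A B f → IsTrivialHom (A := A) (B := B) f
  mem_T : ∀ A : SAct S,
    (∀ B ∈ F, ∀ f : A.carrier → B.carrier, IsHom A B f → IsTrivialHom (A := A) (B := B) f) →
    A ∈ T
  mem_F : ∀ B : SAct S,
    (∀ A ∈ T, ∀ f : A.carrier → B.carrier, IsHom A B f → IsTrivialHom (A := A) (B := B) f) →
    B ∈ F

/-- The product of a family of `S`-acts. -/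
def prodAct {S : Type u} [Monoid S] (ι : Type u) (f : ι → SAct S) : SAct S where
  carrier := ∀ i, (f i).carrier
  mulAction := inferInstance

/-- The Hoehnke radical `r_C` determined by a class `C` closed under subacts and
products: the meet of all congruences whose quotient lies in `C`. -/
def radC {S : Type u} [Monoid S] (C : Set (SAct S)) (A : SAct S) : Setoid A.carrier :=
  sInf {χ : Setoid A.carrier | ∃ h : IsActCon A χ, A.quot χ h ∈ C}

/-- The radical class `R_{r_C}` of the Hoehnke radical `r_C`. -/
def RradC {S : Type u} [Monoid S] (C : Set (SAct S)) : Set (SAct S) :=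
  {A | radC C A = ⊤}

/-! A homomorphism `g` from `π⁻¹(f(B))` to a torsion-free act `D` is constant on every class of
`ρ`: a non-singleton class is a torsion subact, and its image in `D` is trivial. Hence `g` factors
through `π⁻¹(f(B)) → f(B)` and then, along a section of `π`, through `f`, giving a homomorphism
`B → D`. That one is trivial because `B` is torsion, so `g` is trivial as well. -/

namespace SAct

variable {S : Type u} [Monoid S]

theorem reesSetoid_class_eq {A : SAct S} {Sys : Set (Set A.carrier)} (hSys : IsSystem A Sys)
    {C : Set A.carrier} (hC : C ∈ Sys) {a : A.carrier} (ha : a ∈ C) :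
    {x | reesSetoid A Sys hSys x a} = C := by
  ext x
  constructor
  · rintro (rfl | ⟨C', hC', hx, ha'⟩)
    · exact ha
    · by_contra hCC
      exact hSys.2 C' hC' C hC (fun h => hCC (h ▸ hx)) a ha' ha
  · exact fun hx => Or.inr ⟨C, hC, hx, ha⟩

theorem IsRees.eq_or_exists_nsClasses {A : SAct S} {ρ : Setoid A.carrier} (hρ : IsRees A ρ)
    {x y : A.carrier} (hxy : ρ x y) :
    x = y ∨ ∃ C ∈ nsClasses A ρ, IsSubact A C ∧ x ∈ C ∧ y ∈ C := by
  obtain ⟨Sys, hSys, rfl⟩ := hρ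
  rcases hxy with rfl | ⟨C, hC, hx, hy⟩
  · exact Or.inl rfl
  · exact Or.inr ⟨C, ⟨⟨x, (reesSetoid_class_eq hSys hC hx).symm⟩, (hSys.1 C hC).2⟩,
      (hSys.1 C hC).1, hx, hy⟩

theorem isHom_quotient_mk_comp_val (A : SAct S) {ρ : Setoid A.carrier} (hc : IsActCon A ρ)
    {P : Set A.carrier} (hP : IsSubact A P) :
    IsHom (A.sub P hP) (A.quot ρ hc) (fun p => Quotient.mk ρ p.1) :=
  fun _ _ => rfl

theorem IsHom.exists_factor {B P Q D : SAct S} {f : B.carrier → Q.carrier}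
    {π : P.carrier → Q.carrier} {g : P.carrier → D.carrier} (hf : IsHom B Q f)
    (hπ : IsHom P Q π) (hg : IsHom P D g) (hfib : ∀ p p', π p = π p' → g p = g p')
    (hrange : Set.range f ⊆ Set.range π) :
    ∃ k : B.carrier → D.carrier, IsHom B D k ∧ ∀ b p, π p = f b → g p = k b := by
  choose σ hσ using fun b => hrange ⟨b, rfl⟩
  refine ⟨g ∘ σ, fun s b => ?_, fun b p hp => hfib p (σ b) (hp.trans (hσ b).symm)⟩
  have hlift : π (σ (s • b)) = π (s • σ b) := by rw [hσ, hf, hπ, hσ]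
  exact (hfib _ _ hlift).trans (hg s (σ b))

end SAct

namespace IsTorsionTheory

variable {S : Type u} [Monoid S] {T F : Set (SAct S)}

theorem hom_eq_of_mem_subact (htt : IsTorsionTheory T F) {A : SAct S} {C P : Set A.carrier}
    (hC : IsSubact A C) (hP : IsSubact A P) (hCP : C ⊆ P) (hCT : A.sub C hC ∈ T)
    {D : SAct S} (hD : D ∈ F) {g : (A.sub P hP).carrier → D.carrier}
    (hg : IsHom (A.sub P hP) D g) {x y : (A.sub P hP).carrier} (hx : x.1 ∈ C) (hy : y.1 ∈ C) :
    g x = g y :=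
  htt.hom_trivial _ hCT D hD (g ∘ Set.inclusion hCP)
    (fun s c => hg s (Set.inclusion hCP c))
    ⟨⟨x.1, hx⟩, rfl⟩ ⟨⟨y.1, hy⟩, rfl⟩

theorem mem_T_of_fibres (htt : IsTorsionTheory T F) {B P Q : SAct S} (hB : B ∈ T)
    {f : B.carrier → Q.carrier} {π : P.carrier → Q.carrier} (hf : IsHom B Q f)
    (hπ : IsHom P Q π) (hrange : Set.range π = Set.range f)
    (hfib : ∀ D ∈ F, ∀ g : P.carrier → D.carrier, IsHom P D g →
      ∀ p p', π p = π p' → g p = g p') :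
    P ∈ T := by
  refine htt.mem_T P fun D hD g hg => ?_
  obtain ⟨k, hk, hgk⟩ := hf.exists_factor hπ hg (hfib D hD g hg) hrange.ge
  have hgk_range : Set.range g ⊆ Set.range k := by
    rintro _ ⟨p, rfl⟩
    obtain ⟨b, hb⟩ := hrange.le ⟨p, rfl⟩
    exact ⟨b, (hgk b p hb.symm).symm⟩
  exact (htt.hom_trivial B hB D hD k hk).anti hgk_range

end IsTorsionTheory

theorem preimage_of_torsion_image_is_torsion (S : Type u) [Monoid S]
    (T F : Set (SAct S)) (htt : IsTorsionTheory T F)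
    (A : SAct S) (ρ : Setoid A.carrier) (hrees : IsRees A ρ) (hc : IsActCon A ρ)
    (hcls : ∀ C ∈ nsClasses A ρ, ∀ h : IsSubact A C, A.sub C h ∈ T)
    (B : SAct S) (hB : B ∈ T)
    (f : B.carrier → (A.quot ρ hc).carrier) (hf : IsHom B (A.quot ρ hc) f)
    (h : IsSubact A ((fun a => (Quotient.mk ρ a : (A.quot ρ hc).carrier)) ⁻¹'
      Set.range f)) :
    A.sub ((fun a => (Quotient.mk ρ a : (A.quot ρ hc).carrier)) ⁻¹' Set.range f) h ∈ T := by
  refine htt.mem_T_of_fibres hB hf (isHom_quotient_mk_comp_val A hc h) ?_ ?_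
  · refine subset_antisymm (Set.range_subset_iff.2 fun p => p.2) ?_
    rintro _ ⟨b, rfl⟩
    refine ⟨⟨(f b).out, ?_⟩, Quotient.out_eq _⟩
    exact ⟨b, (Quotient.out_eq _).symm⟩
  intro D hD g hg p p' hpp'
  rcases hrees.eq_or_exists_nsClasses (Quotient.exact hpp') with hp | ⟨C, hC, hCsub, hpC, hp'C⟩
  · exact congrArg g (Subtype.ext hp)
  have hCP : C ⊆ (fun a => (Quotient.mk ρ a : (A.quot ρ hc).carrier)) ⁻¹' Set.range f := by
    intro x hx
    obtain ⟨⟨a, rfl⟩, -⟩ := hC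
    show Quotient.mk ρ x ∈ Set.range f
    rw [Quotient.sound (ρ.trans hx (ρ.symm hpC))]
    exact p.2
  exact htt.hom_eq_of_mem_subact hCsub h hCP (hcls C hC hCsub) hD hg hpC hp'C
end

section
/- Let S be a monoid, let r_h be a Hoehnke radical of S-acts, and let r_k be a Kurosh-Amitsur radical with R_{r_k} = R_{r_h}. Then r_k ≤ r_h, and every Kurosh-Amitsur radical r with r ≤ r_h satisfies r ≤ r_k; hence r_k is the largest Kurosh-Amitsur radical below r_h, i.e., r_k = ⋁{r : r a Kurosh-Amitsur radical with r ≤ r_h}. -/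
universe u

open SAct

/-!
A Kurosh–Amitsur radical `r` lies below every Hoehnke radical `r'` whose radical class contains
`R_r`: `r(A)` is the Rees congruence of its non-singleton classes, each class is a subact in
`R_r ⊆ R_{r'}`, and functoriality of `r'` along the inclusion of a class into `A` relates its
elements under `r'(A)`. Both claims are instances of this, with `R_{r_k} = R_{r_h}` for the first
and `R_r ⊆ R_{r_h} = R_{r_k}` for the second.
-/

namespace SAct

variable {S : Type u} [Monoid S]

lemma mem_nsClasses_reesSetoid {A : SAct S} {Sys : Set (Set A.carrier)} (hSys : IsSystem A Sys)
    {B : Set A.carrier} (hB : B ∈ Sys) : B ∈ nsClasses A (reesSetoid A Sys hSys) := by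
  obtain ⟨a, ha⟩ := (Set.not_subsingleton_iff.mp (hSys.1 B hB).2).nonempty
  refine ⟨⟨a, Set.ext fun x => ⟨fun hx => Or.inr ⟨B, hB, hx, ha⟩, ?_⟩⟩, (hSys.1 B hB).2⟩
  rintro (rfl | ⟨C, hC, hxC, haC⟩)
  · exact ha
  · by_contra hxB
    exact hSys.2 B hB C hC (fun hBC => hxB (hBC ▸ hxC)) a ha haC

end SAct

namespace HoehnkeRadical

variable {S : Type u} [Monoid S]

lemma radClass_mono {r r' : HoehnkeRadical S} (h : r.le r') : r.radClass ⊆ r'.radClass :=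
  fun A (hA : r.rad A = ⊤) => top_unique (hA ▸ h A)

lemma rad_of_mem_radClass_sub (r : HoehnkeRadical S) {A : SAct S} {B : Set A.carrier}
    (hB : IsSubact A B) (hrad : A.sub B hB ∈ r.radClass) {a a' : A.carrier}
    (ha : a ∈ B) (ha' : a' ∈ B) : r.rad A a a' :=
  r.functorial (A := A.sub B hB) Subtype.val (fun _ _ => rfl) ⟨a, ha⟩ ⟨a', ha'⟩
    (by rw [show r.rad (A.sub B hB) = ⊤ from hrad]; trivial)

end HoehnkeRadical

namespace KARadical

variable {S : Type u} [Monoid S]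

lemma eq_or_exists_radClass_subact_of_rad (r : KARadical S) {A : SAct S} {a a' : A.carrier}
    (h : r.rad A a a') : a = a' ∨ ∃ (B : Set A.carrier) (hB : IsSubact A B),
      A.sub B hB ∈ r.radClass ∧ a ∈ B ∧ a' ∈ B := by
  obtain ⟨Sys, hSys, hEq⟩ := r.rees A
  rw [hEq] at h
  rcases h with rfl | ⟨B, hB, ha, ha'⟩
  · exact Or.inl rfl
  · refine Or.inr ⟨B, (hSys.1 B hB).1, r.cls_rad A B ?_ _, ha, ha'⟩
    rw [hEq]
    exact mem_nsClasses_reesSetoid hSys hB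

lemma le_of_radClass_subset (r : KARadical S) {r' : HoehnkeRadical S}
    (h : r.radClass ⊆ r'.radClass) : r.le r' := by
  intro A a a' haa'
  rcases r.eq_or_exists_radClass_subact_of_rad haa' with rfl | ⟨B, hB, hrad, ha, ha'⟩
  · exact (r'.rad A).refl a
  · exact r'.rad_of_mem_radClass_sub hB (h hrad) ha ha'

end KARadical

theorem KA_radical_is_largest_below_hoehnke (S : Type u) [Monoid S]
    (rh : HoehnkeRadical S) (rk : KARadical S)
    (hR : rk.toHoehnkeRadical.radClass = rh.radClass) :
    rk.toHoehnkeRadical.le rh ∧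
      ∀ r : KARadical S, r.toHoehnkeRadical.le rh →
        r.toHoehnkeRadical.le rk.toHoehnkeRadical :=
  ⟨rk.le_of_radClass_subset hR.subset, fun r hr =>
    r.le_of_radClass_subset ((HoehnkeRadical.radClass_mono hr).trans hR.symm.subset)⟩
end
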